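/- arXiv:2206.09425 — 2 statements merged into one kernel-verified Lean document; each statement's English description precedes it below -/
import Mathlib

section
/- If u^{n+1} satisfies u_i^{n+1} + c_{i-1}(u_i^{n+1} - u_{i-1}^{n+1}) = u_i^n for i = 1, ..., I with coefficients c_{i-1} ≥ 0, and the boundary conditions u_1^{n+1} = u_0^{n+1} and u_I^{n+1} = u_{I-1}^{n+1} hold, then the total variation does not increase: ∑_{i=1}^{I} |u_i^{n+1} - u_{i-1}^{n+1}| ≤ ∑_{i=1}^{I} |u_i^n - u_{i-1}^n|. -/
/-!
Writing `dᵢ = uᵢⁿ⁺¹ - uᵢ₋₁ⁿ⁺¹`, subtracting consecutive equations of the scheme gives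
`uᵢⁿ - uᵢ₋₁ⁿ = (1 + cᵢ₋₁) dᵢ - cᵢ₋₂ dᵢ₋₁`, so by the triangle inequality
`|dᵢ| + cᵢ₋₁ |dᵢ| ≤ |uᵢⁿ - uᵢ₋₁ⁿ| + cᵢ₋₂ |dᵢ₋₁|`. The terms `cᵢ₋₁ |dᵢ|` telescope when summed
over `i`; the left boundary condition kills the incoming term and the outgoing one is nonnegative.
-/

open Finset

theorem abs_add_mul_abs_le {p q : ℝ} (hp : 0 ≤ p) (hq : 0 ≤ q) (x y : ℝ) :
    |x| + p * |x| ≤ |(1 + p) * x - q * y| + q * |y| := by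
  have h := abs_sub_abs_le_abs_sub ((1 + p) * x) (q * y)
  rw [abs_mul, abs_mul, abs_of_nonneg (by linarith), abs_of_nonneg hq] at h
  linarith

theorem sum_Icc_add_le_sum_Icc_add {g D e : ℕ → ℝ} {n : ℕ}
    (h : ∀ i, 1 ≤ i → i ≤ n → g i + e i ≤ D i + e (i - 1)) :
    ∑ i ∈ Icc 1 n, g i + e n ≤ ∑ i ∈ Icc 1 n, D i + e 0 := by
  induction n with
  | zero => simp
  | succ n ih =>
    have hn := h (n + 1) (by omega) le_rfl
    have ih := ih fun i h1 hi => h i h1 (by omega)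
    rw [sum_Icc_succ_top (by omega), sum_Icc_succ_top (by omega)]
    simp only [Nat.add_sub_cancel] at hn
    linarith

theorem implicit_upwind_cell_le {I : ℕ} {un un1 c : ℕ → ℝ} (hc : ∀ i, 0 ≤ c i)
    (hscheme : ∀ i, 1 ≤ i → i ≤ I →
      un1 i + c (i - 1) * (un1 i - un1 (i - 1)) = un i)
    (hbc0 : un1 1 = un1 0) {i : ℕ} (h1 : 1 ≤ i) (hi : i ≤ I) :
    |un1 i - un1 (i - 1)| + c (i - 1) * |un1 i - un1 (i - 1)| ≤
      |un i - un (i - 1)| + c (i - 2) * |un1 (i - 1) - un1 (i - 2)| := by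
  obtain rfl | ⟨j, rfl⟩ : i = 1 ∨ ∃ j, i = j + 2 := by
    rcases Nat.lt_or_ge i 2 with h2 | h2
    · exact Or.inl (by omega)
    · exact Or.inr ⟨i - 2, by omega⟩
  · simp only [hbc0, sub_self, abs_zero, mul_zero, add_zero]
    positivity
  · have hi := hscheme (j + 2) (by omega) hi
    have hi' := hscheme (j + 1) le_add_self (by omega)
    simp only [Nat.add_sub_cancel, Nat.add_succ_sub_one] at hi hi' ⊢
    have hdiff : un (j + 2) - un (j + 1) =
        (1 + c (j + 1)) * (un1 (j + 2) - un1 (j + 1)) - c j * (un1 (j + 1) - un1 j) := by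
      rw [← hi, ← hi']
      ring
    rw [hdiff]
    exact abs_add_mul_abs_le (hc _) (hc _) _ _

theorem tvd_of_nonneg_coeffs_general (I : ℕ)
    (un un1 c : ℕ → ℝ)
    (hc : ∀ i, 0 ≤ c i)
    (hscheme : ∀ i, 1 ≤ i → i ≤ I →
      un1 i + c (i - 1) * (un1 i - un1 (i - 1)) = un i)
    (hbc0 : un1 1 = un1 0) :
    ∑ i ∈ Finset.Icc 1 I, |un1 i - un1 (i - 1)| ≤
      ∑ i ∈ Finset.Icc 1 I, |un i - un (i - 1)| := by
  set flux : ℕ → ℝ := fun i => c (i - 1) * |un1 i - un1 (i - 1)|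
  have hbalance := sum_Icc_add_le_sum_Icc_add (e := flux) fun i h1 hi =>
    implicit_upwind_cell_le hc hscheme hbc0 h1 hi
  have hflux : 0 ≤ flux I := mul_nonneg (hc _) (abs_nonneg _)
  have hflux0 : flux 0 = 0 := by simp [flux]
  linarith

theorem tvd_of_nonneg_coeffs (I : ℕ) (hI : 2 ≤ I)
    (un un1 c : ℕ → ℝ)
    (hc : ∀ i, 0 ≤ c i)
    (hscheme : ∀ i, 1 ≤ i → i ≤ I →
      un1 i + c (i - 1) * (un1 i - un1 (i - 1)) = un i)
    (hbc0 : un1 1 = un1 0) (hbcI : un1 I = un1 (I - 1)) :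
    ∑ i ∈ Finset.Icc 1 I, |un1 i - un1 (i - 1)| ≤
      ∑ i ∈ Finset.Icc 1 I, |un i - un (i - 1)| :=
  tvd_of_nonneg_coeffs_general I un un1 c hc hscheme hbc0
end

section
/- For Courant number C ≥ 1, the weight function ω_C(r) defined by ω_C(r) = 1/(r−1) for r ≥ 2, ω_C(r) = (1+C)/(C(1−r)) for r ≤ −1/C, and ω_C(r) = 1 otherwise, takes values in [0,1], and the associated limiter Ψ_C(r) = 1 − ω_C(r) + ω_C(r)·r satisfies −1/C ≤ Ψ_C(r) ≤ 2 for all r ∈ ℝ. -/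
noncomputable def omegaC (C r : ℝ) : ℝ :=
  if 2 ≤ r then 1 / (r - 1)
  else if r ≤ -1 / C then (1 + C) / (C * (1 - r))
  else 1

theorem omegaC_limiter_properties (C : ℝ) (hC : 1 ≤ C) :
    (∀ r : ℝ, 0 ≤ omegaC C r ∧ omegaC C r ≤ 1) ∧
    (∀ r : ℝ, -1 / C ≤ 1 - omegaC C r + omegaC C r * r ∧
      1 - omegaC C r + omegaC C r * r ≤ 2) := by
  have hC0 : (0:ℝ) < C := lt_of_lt_of_le one_pos hC
  have hinv : -1 / C < 0 := by
    rw [div_neg_iff]; right; constructor <;> linarith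
  constructor
  · intro r
    unfold omegaC
    split_ifs with h1 h2
    · have hr : (0:ℝ) < r - 1 := by linarith
      constructor
      · positivity
      · rw [div_le_one hr]; linarith
    · have hden : (0:ℝ) < C * (1 - r) := by
        have hr : r < 0 := lt_of_le_of_lt h2 hinv
        have : 0 < 1 - r := by linarith
        positivity
      constructor
      · have hnum : (0:ℝ) ≤ 1 + C := by linarith
        positivity
      · rw [div_le_one hden]
        have hCr : C * r ≤ -1 := by
          have h := mul_le_mul_of_nonneg_left h2 hC0.le
          rw [show C * (-1 / C) = -1 by field_simp] at h
          exact h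
        linarith
    · exact ⟨zero_le_one, le_refl 1⟩
  · intro r
    unfold omegaC
    split_ifs with h1 h2
    · have hr : (0:ℝ) < r - 1 := by linarith
      have key : 1 - 1 / (r - 1) + 1 / (r - 1) * r = 2 := by
        field_simp
        ring
      rw [key]
      constructor <;> linarith
    · have hr : r < 0 := lt_of_le_of_lt h2 hinv
      have hden : (1:ℝ) - r ≠ 0 := by intro h; linarith
      have key : 1 - (1 + C) / (C * (1 - r)) + (1 + C) / (C * (1 - r)) * r = -1 / C := by
        field_simp
        ring
      rw [key]
      constructor <;> linarith
    · push_neg at h1 h2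
      constructor <;> · simp; linarith
end
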